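/- Assume that $\mathcal S$ is primitive and let $x'$ be a finite patch with $x'\subseteq S^n_{\bar a}(D)$ for some $n>0$ and tile $D\in\mathcal P^1(X)$. Then there exists $R>0$ such that for every $\bar b\in\Sigma$ with $d_\Sigma(\bar a,\bar b)<1/n$, every tiling $x\in X_{\bar b}$ and every closed ball $B\subseteq\mathbb R^d$ of radius $R$, there is $\vec t\in\mathbb R^d$ with $\vec t+x'\subset x$ and $\operatorname{supp}(\vec t+x')\subseteq B$. -/

import Mathlib

open Filter Topology Set Metric MeasureTheory

noncomputable section

/-- Points of `ℝ^d`. -/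
abbrev Pt (d : ℕ) := EuclideanSpace ℝ (Fin d)

/-- A patch is a collection of subsets of `ℝ^d` (intended: tiles with disjoint interiors). -/
abbrev Patch (d : ℕ) := Set (Set (Pt d))

/-- Translation of a single tile. -/
def tileTrans {d : ℕ} (t : Pt d) (D : Set (Pt d)) : Set (Pt d) := (fun p => t + p) '' D

/-- Translation of a patch, `t + x`. -/
def patchTrans {d : ℕ} (t : Pt d) (x : Patch d) : Patch d := tileTrans t '' x

/-- A tile: compact, connected, and the closure of its interior. -/
def IsTile {d : ℕ} (D : Set (Pt d)) : Prop :=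
  IsCompact D ∧ IsConnected D ∧ D = closure (interior D)

/-- A patch: a collection of tiles with pairwise disjoint interiors. -/
def IsPatch {d : ℕ} (x : Patch d) : Prop :=
  (∀ D ∈ x, IsTile D) ∧
  ∀ D ∈ x, ∀ D' ∈ x, D ≠ D' → interior D ∩ interior D' = ∅

/-- The support of a patch: the union of its tiles. -/
def psupp {d : ℕ} (x : Patch d) : Set (Pt d) := ⋃ D ∈ x, D

/-- A tiling of `ℝ^d`: a patch whose support is all of `ℝ^d`. -/
def IsTiling {d : ℕ} (x : Patch d) : Prop := IsPatch x ∧ psupp x = univ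

/-- The tiles occurring in tilings of `X`. -/
def TilesOf {d : ℕ} (X : Set (Patch d)) : Set (Set (Pt d)) := {D | ∃ x ∈ X, D ∈ x}

/-- `𝒫(X)`: the finite patches contained in tilings of `X`. -/
def Patches {d : ℕ} (X : Set (Patch d)) : Set (Patch d) :=
  {x' | x'.Finite ∧ ∃ x ∈ X, x' ⊆ x}

/-- `𝒫^N(X)`: the patches with `N` tiles contained in tilings of `X`. -/
def PatchesCard {d : ℕ} (X : Set (Patch d)) (N : ℕ) : Set (Patch d) :=
  {x' | x'.Finite ∧ x'.ncard = N ∧ ∃ x ∈ X, x' ⊆ x}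

/-- `X` is invariant under the translation action. -/
def TransInvariant {d : ℕ} (X : Set (Patch d)) : Prop :=
  ∀ t : Pt d, ∀ x ∈ X, patchTrans t x ∈ X

/-- Finite local complexity: for each `N` there are only finitely many `N`-tile patches
in tilings of `X` up to translation. -/
def FLC {d : ℕ} (X : Set (Patch d)) : Prop :=
  ∀ N : ℕ, ∃ F : Finset (Patch d),
    ∀ x' ∈ PatchesCard X N, ∃ y ∈ F, ∃ t : Pt d, patchTrans t y = x'

/-- The tiling metric `d_T`. -/
def dT {d : ℕ} (x y : Patch d) : ℝ :=
  sInf ({Real.sqrt 2 / 2} ∪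
    {r : ℝ | 0 < r ∧ r < Real.sqrt 2 / 2 ∧
      ∃ x' ⊆ x, ∃ y' ⊆ y,
        Bornology.IsBounded (psupp x') ∧ Bornology.IsBounded (psupp y') ∧
        closedBall (0 : Pt d) (1 / r) ⊆ psupp x' ∧
        closedBall (0 : Pt d) (1 / r) ⊆ psupp y' ∧
        ∃ t : Pt d, ‖t‖ ≤ r ∧ patchTrans t x' = y'})

/-- A (self-similar) substitution on the tiles of `X`, with dilatation factor `lam`,
extended tile-by-tile to patches, mapping finite patches of `X` to finite patches of `X`
and tilings of `X` to tilings of `X`. -/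
structure Substitution (d : ℕ) (X : Set (Patch d)) where
  map : Set (Pt d) → Patch d
  lam : ℝ
  one_lt_lam : 1 < lam
  supp_eq : ∀ D ∈ TilesOf X, psupp (map D) = (fun p => lam • p) '' D
  equivar : ∀ (t : Pt d) (D : Set (Pt d)), map (tileTrans t D) = patchTrans (lam • t) (map D)
  maps_patches : ∀ x' ∈ Patches X, (⋃ D ∈ x', map D) ∈ Patches X
  maps_X : ∀ x ∈ X, (⋃ D ∈ x, map D) ∈ X

/-- A substitution applied to a patch, tile by tile. -/
def substPatch {d : ℕ} {X : Set (Patch d)} (S : Substitution d X) (x : Patch d) : Patch d :=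
  ⋃ D ∈ x, S.map D

/-- The structure matrix of a substitution with respect to prototiles `Dp`:
entry `(i,j)` is the number of tiles equivalent (translation-equal) to `Dp i` in `S (Dp j)`. -/
def structMat {d l : ℕ} {X : Set (Patch d)} (Dp : Fin l → Set (Pt d)) (S : Substitution d X) :
    Matrix (Fin l) (Fin l) ℕ :=
  fun i j => {D | D ∈ S.map (Dp j) ∧ ∃ t : Pt d, D = tileTrans t (Dp i)}.ncard

/-- `Dp` is a complete family of pairwise non-equivalent prototiles of `X`. -/
def IsPrototileBasis {d l : ℕ} (X : Set (Patch d)) (Dp : Fin l → Set (Pt d)) : Prop :=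
  (∀ i, Dp i ∈ TilesOf X) ∧
  (∀ i j, i ≠ j → ∀ t : Pt d, tileTrans t (Dp i) ≠ Dp j) ∧
  ∀ D ∈ TilesOf X, ∃ i, ∃ t : Pt d, tileTrans t (Dp i) = D

/-- `S^n_ā = S_{a_1} ∘ S_{a_2} ∘ ⋯ ∘ S_{a_n}` acting on patches (`a 0` plays the role
of `a_1`). -/
def substSeq {d k : ℕ} {X : Set (Patch d)} (S : Fin k → Substitution d X) :
    (ℕ → Fin k) → ℕ → Patch d → Patch d
  | _, 0 => id
  | a, n + 1 => fun x => substPatch (S (a 0)) (substSeq S (fun i => a (i + 1)) n x)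

/-- `A^n_ā = A_{a_1} A_{a_2} ⋯ A_{a_n}`. -/
def matSeq {l k : ℕ} (A : Fin k → Matrix (Fin l) (Fin l) ℕ) :
    (ℕ → Fin k) → ℕ → Matrix (Fin l) (Fin l) ℕ
  | _, 0 => 1
  | a, n + 1 => A (a 0) * matSeq A (fun i => a (i + 1)) n

/-- Primitivity of the sequence of structure matrices `(A_{a_n})`: for every `n` some
product `A_{a_n} A_{a_{n+1}} ⋯ A_{a_{n+N}}` has all entries positive. -/
def SeqPrimitive {l k : ℕ} (A : Fin k → Matrix (Fin l) (Fin l) ℕ) (a : ℕ → Fin k) : Prop :=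
  ∀ n : ℕ, ∃ N : ℕ, ∀ p q : Fin l, 0 < matSeq A (fun m => a (n + m)) (N + 1) p q

/-- The multi-substitution tiling space `X_ā` (with initial tile `D`). -/
def multiSpace {d k : ℕ} {X : Set (Patch d)} (S : Fin k → Substitution d X) (a : ℕ → Fin k)
    (D : Set (Pt d)) : Set (Patch d) :=
  {x | x ∈ X ∧ ∀ x' ⊆ x, x'.Finite →
    ∃ n : ℕ, 0 < n ∧ ∃ t : Pt d, patchTrans t x' ⊆ substSeq S a n {D}}

/-- The substitution tiling space of a single substitution, given by its action
`F` on patches (with initial tile `D`). -/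
def substSpaceF {d : ℕ} (X : Set (Patch d)) (F : Patch d → Patch d) (D : Set (Pt d)) :
    Set (Patch d) :=
  {x | x ∈ X ∧ ∀ x' ⊆ x, x'.Finite →
    ∃ m : ℕ, 0 < m ∧ ∃ t : Pt d, patchTrans t x' ⊆ F^[m] {D}}

open Classical in
/-- The metric on `Σ = {1,…,k}^ℕ`: `d(ā,b̄) = 1/L` where `L` is the least (1-indexed)
position where the sequences differ, and `0` if they are equal. -/
def dSigma {k : ℕ} (a b : ℕ → Fin k) : ℝ :=
  if h : ∃ n, a n ≠ b n then 1 / ((Nat.find h : ℝ) + 1) else 0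

/-- The shift `σ` on `Σ`. -/
def seqShift {k : ℕ} (a : ℕ → Fin k) : ℕ → Fin k := fun n => a (n + 1)

/-- A substitution is recognizable if it is injective on `X`. -/
def Recognizable {d : ℕ} {X : Set (Patch d)} (S : Substitution d X) : Prop :=
  ∀ x ∈ X, ∀ y ∈ X, substPatch S x = substPatch S y → x = y

/-- A substitution is strongly recognizable if it is recognizable and `S(D') ⊆ S(x)`
implies `D' ∈ x` for every tiling `x ∈ X` and tile `D'`. -/
def StronglyRecognizable {d : ℕ} {X : Set (Patch d)} (S : Substitution d X) : Prop :=
  Recognizable S ∧ ∀ x ∈ X, ∀ D' ∈ TilesOf X, S.map D' ⊆ substPatch S x → D' ∈ x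

/-- `L_{x'}(y')`: the number of translated copies of `x'` contained in `y'`. -/
def Lcount {d : ℕ} (x' y' : Patch d) : ℕ := {t : Pt d | patchTrans t x' ⊆ y'}.ncard

/-- The Euclidean volume of the support of a patch. -/
def pvol {d : ℕ} (y' : Patch d) : ℝ := (volume (psupp y')).toReal

/-- `L^x_{x'}(H)`: the number of translated copies of `x'` contained in `x` whose support
is contained in `H`. -/
def LcountIn {d : ℕ} (x x' : Patch d) (H : Set (Pt d)) : ℕ :=
  {t : Pt d | patchTrans t x' ⊆ x ∧ psupp (patchTrans t x') ⊆ H}.ncard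

/-- `H^{+r}`: the set of points at distance at most `r` from `H`. -/
def plusR {d : ℕ} (H : Set (Pt d)) (r : ℝ) : Set (Pt d) := {t | ∃ h ∈ H, dist t h ≤ r}

/-- Van Hove sequence of subsets of `ℝ^d`. -/
def VanHove {d : ℕ} (H : ℕ → Set (Pt d)) : Prop :=
  ∀ r : ℝ, 0 ≤ r →
    Tendsto (fun n => (volume (plusR (frontier (H n)) r)).toReal / (volume (H n)).toReal)
      atTop (nhds 0)

/-- A tiling of `X_ā` which is an increasing union of translates of the supertiles
`S^{k_n}_ā(D)`. -/
def Hierarchical {d k : ℕ} {X : Set (Patch d)} (S : Fin k → Substitution d X) (a : ℕ → Fin k)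
    (x : Patch d) : Prop :=
  ∃ (kn : ℕ → ℕ) (tn : ℕ → Pt d) (D : Set (Pt d)), D ∈ TilesOf X ∧
    Tendsto kn atTop atTop ∧
    (∀ n, patchTrans (tn n) (substSeq S a (kn n) {D}) ⊆
      patchTrans (tn (n + 1)) (substSeq S a (kn (n + 1)) {D})) ∧
    x = ⋃ n, patchTrans (tn n) (substSeq S a (kn n) {D})

/-- The topology on the space of patches generated by the `d_T`-balls. -/
def tilingTopology (d : ℕ) : TopologicalSpace (Patch d) :=
  TopologicalSpace.generateFrom {U | ∃ (x : Patch d) (r : ℝ), 0 < r ∧ U = {y | dT x y < r}}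

/-- The Borel σ-algebra associated to the tiling topology. -/
def tilingMeasurable (d : ℕ) : MeasurableSpace (Patch d) :=
  @borel (Patch d) (tilingTopology d)

/-- A Borel probability measure concentrated on `Y` and invariant under the translation
action. -/
def GoodMeasure {d : ℕ} (Y : Set (Patch d))
    (μ : @MeasureTheory.Measure (Patch d) (tilingMeasurable d)) : Prop :=
  letI := tilingMeasurable d
  μ Set.univ = 1 ∧ μ Yᶜ = 0 ∧
    ∀ (t : Pt d) (s : Set (Patch d)), μ (patchTrans t ⁻¹' s) = μ s

/-- `ν` is the pushforward of `μ` under `F`. -/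
def PushForwardEq {d : ℕ} (F : Patch d → Patch d)
    (μ ν : @MeasureTheory.Measure (Patch d) (tilingMeasurable d)) : Prop :=
  letI := tilingMeasurable d
  ∀ s : Set (Patch d), μ (F ⁻¹' s) = ν s

/-!
By compactness of `Σ`, primitivity is uniform: some `N` makes every product of `N + 1`
consecutive structure matrices positive, whatever the sequence. Hence every supertile of order
`N + 1` contains a copy of `D`, and every supertile of order `M = n + N + 1` of a sequence
agreeing with `ā` on its first `n` letters contains a copy of `S^n_ā(D) ⊇ x'`; such supertiles
have diameter at most `R = Λ^M δ`, where `Λ` bounds the dilatations and `δ` the tile diameters.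
Given `x ∈ X_b̄` and a ball of radius `R`, the finitely many tiles of `x` meeting it lie in a
translate of a supertile of order `m`, and `m ≥ M` because that supertile contains the ball. The
order-`M` supertile through the centre then lies within the ball and carries a copy of `x'`,
which belongs to `x` since a subpatch of a tiling is determined by its support.
-/

open scoped Pointwise

section Translation

variable {d : ℕ}

lemma tileTrans_eq_vadd (t : Pt d) (D : Set (Pt d)) : tileTrans t D = t +ᵥ D := rfl

lemma tileTrans_tileTrans (s t : Pt d) (D : Set (Pt d)) :
    tileTrans s (tileTrans t D) = tileTrans (s + t) D := by
  simp only [tileTrans, Set.image_image, add_assoc]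

lemma tileTrans_zero (D : Set (Pt d)) : tileTrans 0 D = D := by
  simp [tileTrans]

lemma patchTrans_patchTrans (s t : Pt d) (x : Patch d) :
    patchTrans s (patchTrans t x) = patchTrans (s + t) x := by
  simp only [patchTrans, Set.image_image, tileTrans_tileTrans]

lemma patchTrans_zero (x : Patch d) : patchTrans 0 x = x := by
  simp [patchTrans, tileTrans_zero]

lemma patchTrans_mono (t : Pt d) {x y : Patch d} (h : x ⊆ y) : patchTrans t x ⊆ patchTrans t y :=
  Set.image_mono h

lemma patchTrans_singleton (t : Pt d) (D : Set (Pt d)) :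
    patchTrans t {D} = {tileTrans t D} :=
  Set.image_singleton

lemma mem_psupp {x : Patch d} {p : Pt d} : p ∈ psupp x ↔ ∃ D ∈ x, p ∈ D := by
  simp [psupp]

lemma subset_psupp {x : Patch d} {D : Set (Pt d)} (h : D ∈ x) : D ⊆ psupp x :=
  Set.subset_biUnion_of_mem (u := id) h

lemma psupp_mono {x y : Patch d} (h : x ⊆ y) : psupp x ⊆ psupp y :=
  Set.biUnion_subset_biUnion_left h

lemma psupp_singleton (D : Set (Pt d)) : psupp ({D} : Patch d) = D := by
  simp [psupp]

lemma psupp_patchTrans (t : Pt d) (x : Patch d) :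
    psupp (patchTrans t x) = t +ᵥ psupp x := by
  simp only [psupp, patchTrans, Set.biUnion_image, tileTrans_eq_vadd, Set.vadd_set_iUnion₂]

lemma diam_tileTrans (t : Pt d) (D : Set (Pt d)) : diam (tileTrans t D) = diam D :=
  diam_vadd t D

lemma volume_interior_tileTrans (t : Pt d) (D : Set (Pt d)) :
    volume (interior (tileTrans t D)) = volume (interior D) := by
  rw [tileTrans_eq_vadd, interior_vadd, measure_vadd]

end Translation

lemma IsTile.interior_nonempty {d : ℕ} {E : Set (Pt d)} (hE : IsTile E) :
    (interior E).Nonempty := by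
  rw [Set.nonempty_iff_ne_empty]
  intro h
  exact hE.2.1.nonempty.ne_empty (by rw [hE.2.2, h, closure_empty])

/-- `Q'` is the closure of its interior, so the interiors of `Q` and `Q'` meet. -/
lemma IsPatch.eq_of_interior_inter_nonempty {d : ℕ} {z : Patch d} (hz : IsPatch z)
    {Q Q' : Set (Pt d)} (hQ : Q ∈ z) (hQ' : Q' ∈ z) (h : (interior Q ∩ Q').Nonempty) :
    Q = Q' := by
  by_contra hne
  obtain ⟨p, hpQ, hpQ'⟩ := h
  rw [(hz.1 Q' hQ').2.2] at hpQ'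
  have hmeet := mem_closure_iff.1 hpQ' _ isOpen_interior hpQ
  rw [hz.2 Q hQ Q' hQ' hne] at hmeet
  exact Set.not_nonempty_empty hmeet

lemma IsPatch.subset_of_psupp_subset {d : ℕ} {z y C : Patch d} (hz : IsPatch z) (hy : y ⊆ z)
    (hC : C ⊆ z) (h : psupp C ⊆ psupp y) : C ⊆ y := by
  intro Q hQ
  obtain ⟨p, hp⟩ := (hz.1 Q (hC hQ)).interior_nonempty
  obtain ⟨Q', hQ', hpQ'⟩ := mem_psupp.1 (h (subset_psupp hQ (interior_subset hp)))
  rwa [hz.eq_of_interior_inter_nonempty (hC hQ) (hy hQ') ⟨p, hp, hpQ'⟩]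

lemma Set.Finite.of_pairwise_disjoint_interior {α : Type*} [TopologicalSpace α]
    [MeasurableSpace α] [OpensMeasurableSpace α] (μ : Measure α) {T : Set (Set α)} {K : Set α}
    (hK : μ K ≠ ⊤) (hTK : ∀ Q ∈ T, Q ⊆ K)
    (hT : T.Pairwise fun Q Q' => Disjoint (interior Q) (interior Q'))
    {v : ENNReal} (hv : 0 < v) (hvT : ∀ Q ∈ T, v ≤ μ (interior Q)) : T.Finite := by
  have hfin := Measure.finite_const_le_meas_of_disjoint_iUnion μ hv
    (As := fun Q : T => interior Q.1) (fun _ => isOpen_interior.measurableSet)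
    (fun Q Q' hne => hT Q.2 Q'.2 (Subtype.coe_ne_coe.2 hne))
    (ne_top_of_le_ne_top hK (measure_mono (Set.iUnion_subset fun Q =>
      interior_subset.trans (hTK Q.1 Q.2))))
  rw [Set.eq_univ_of_forall (s := {Q : T | v ≤ μ (interior Q.1)}) fun Q => hvT Q.1 Q.2,
    Set.finite_univ_iff] at hfin
  exact Set.finite_coe_iff.1 hfin

section Tiles

variable {d l : ℕ} {X : Set (Patch d)}

lemma isTile_of_mem_TilesOf (hX : ∀ x ∈ X, IsTiling x) {E : Set (Pt d)} (hE : E ∈ TilesOf X) :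
    IsTile E := by
  obtain ⟨z, hz, hEz⟩ := hE
  exact (hX z hz).1.1 E hEz

lemma singleton_mem_Patches {D : Set (Pt d)} (hD : D ∈ TilesOf X) :
    ({D} : Patch d) ∈ Patches X := by
  obtain ⟨z, hz, hDz⟩ := hD
  exact ⟨Set.finite_singleton _, z, hz, Set.singleton_subset_iff.2 hDz⟩

lemma mem_TilesOf_of_mem_Patches {x' : Patch d} (h : x' ∈ Patches X) {P : Set (Pt d)}
    (hP : P ∈ x') : P ∈ TilesOf X := by
  obtain ⟨-, z, hz, hsub⟩ := h
  exact ⟨z, hz, hsub hP⟩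

lemma IsPrototileBasis.exists_diam_le {Dp : Fin l → Set (Pt d)} (hDp : IsPrototileBasis X Dp) :
    ∃ δ, 0 < δ ∧ ∀ E ∈ TilesOf X, diam E ≤ δ := by
  obtain ⟨δ, hδ⟩ := Finite.bddAbove_range fun i => diam (Dp i)
  refine ⟨max δ 1, by positivity, fun E hE => ?_⟩
  obtain ⟨i, t, rfl⟩ := hDp.2.2 E hE
  rw [diam_tileTrans]
  exact (hδ ⟨i, rfl⟩).trans (le_max_left _ _)

def tilesMeeting (x : Patch d) (K : Set (Pt d)) : Patch d := {Q | Q ∈ x ∧ (Q ∩ K).Nonempty}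

lemma tilesMeeting_subset (x : Patch d) (K : Set (Pt d)) : tilesMeeting x K ⊆ x :=
  fun _ hQ => hQ.1

lemma subset_psupp_tilesMeeting {x : Patch d} (hx : IsTiling x) (K : Set (Pt d)) :
    K ⊆ psupp (tilesMeeting x K) := by
  intro p hp
  obtain ⟨Q, hQ, hpQ⟩ := mem_psupp.1 (hx.2 ▸ Set.mem_univ p)
  exact mem_psupp.2 ⟨Q, ⟨hQ, p, hpQ, hp⟩, hpQ⟩

/-- Local finiteness: the tiles meeting a ball are translates of finitely many prototiles, lie in a
bounded region and have disjoint interiors of volume bounded below. -/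
lemma finite_tilesMeeting_closedBall (hX : ∀ x ∈ X, IsTiling x) {Dp : Fin l → Set (Pt d)}
    (hDp : IsPrototileBasis X Dp) {x : Patch d} (hx : x ∈ X) (c : Pt d) (ρ : ℝ) :
    (tilesMeeting x (closedBall c ρ)).Finite := by
  obtain ⟨δ, -, hδ⟩ := hDp.exists_diam_le
  set T := tilesMeeting x (closedBall c ρ)
  have hTX : ∀ Q ∈ T, Q ∈ TilesOf X := fun Q hQ => ⟨x, hx, hQ.1⟩
  have hcover : T ⊆ ⋃ i, {Q ∈ T | ∃ t, tileTrans t (Dp i) = Q} := fun Q hQ => by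
    obtain ⟨i, t, ht⟩ := hDp.2.2 Q (hTX Q hQ)
    exact Set.mem_iUnion.2 ⟨i, hQ, t, ht⟩
  refine (Set.finite_iUnion fun i => ?_).subset hcover
  refine Set.Finite.of_pairwise_disjoint_interior volume (K := closedBall c (ρ + δ))
    measure_closedBall_lt_top.ne (fun Q hQ p hp => ?_) (fun Q hQ Q' hQ' hne => ?_)
    (isOpen_interior.measure_pos volume
      (isTile_of_mem_TilesOf hX (hDp.1 i)).interior_nonempty) (fun Q hQ => ?_)
  · obtain ⟨q, hqQ, hqc⟩ := hQ.1.2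
    have hQb : Bornology.IsBounded Q := (isTile_of_mem_TilesOf hX (hTX Q hQ.1)).1.isBounded
    rw [mem_closedBall] at hqc ⊢
    linarith [dist_triangle p q c,
      (dist_le_diam_of_mem hQb hp hqQ).trans (hδ Q (hTX Q hQ.1))]
  · exact Set.disjoint_iff_inter_eq_empty.2 ((hX x hx).1.2 Q hQ.1.1 Q' hQ'.1.1 hne)
  · obtain ⟨t, rfl⟩ := hQ.2
    rw [volume_interior_tileTrans]

end Tiles

section Substitution

variable {d k : ℕ} {X : Set (Patch d)}

lemma substPatch_mono (Su : Substitution d X) {x y : Patch d} (h : x ⊆ y) :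
    substPatch Su x ⊆ substPatch Su y :=
  Set.biUnion_subset_biUnion_left h

lemma substPatch_mem_Patches (Su : Substitution d X) {x' : Patch d} (h : x' ∈ Patches X) :
    substPatch Su x' ∈ Patches X :=
  Su.maps_patches x' h

lemma substPatch_biUnion (Su : Substitution d X) (x : Patch d) (f : Set (Pt d) → Patch d) :
    substPatch Su (⋃ E ∈ x, f E) = ⋃ E ∈ x, substPatch Su (f E) := by
  simp only [substPatch, Set.biUnion_iUnion]

lemma substPatch_patchTrans (Su : Substitution d X) (t : Pt d) (x : Patch d) :
    substPatch Su (patchTrans t x) = patchTrans (Su.lam • t) (substPatch Su x) := by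
  simp only [substPatch, patchTrans, Set.biUnion_image, Su.equivar, Set.image_iUnion₂]

lemma psupp_substPatch (Su : Substitution d X) {x : Patch d} (h : ∀ D ∈ x, D ∈ TilesOf X) :
    psupp (substPatch Su x) = Su.lam • psupp x := by
  have hbiUnion : psupp (substPatch Su x) = ⋃ D ∈ x, psupp (Su.map D) := by
    ext p
    simp only [substPatch, mem_psupp, Set.mem_iUnion]
    grind
  rw [hbiUnion, psupp, Set.smul_set_iUnion₂]
  exact Set.iUnion₂_congr fun D hD => Su.supp_eq D (h D hD)

lemma substSeq_succ (S : Fin k → Substitution d X) (a : ℕ → Fin k) (m : ℕ) (x : Patch d) :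
    substSeq S a (m + 1) x = substPatch (S (a 0)) (substSeq S (fun i => a (i + 1)) m x) :=
  rfl

lemma substSeq_mono (S : Fin k → Substitution d X) (a : ℕ → Fin k) (m : ℕ) {x y : Patch d}
    (h : x ⊆ y) : substSeq S a m x ⊆ substSeq S a m y := by
  induction m generalizing a with
  | zero => exact h
  | succ m ih => exact substPatch_mono _ (ih _)

lemma substSeq_congr (S : Fin k → Substitution d X) {a b : ℕ → Fin k} {m : ℕ}
    (h : ∀ i < m, a i = b i) (x : Patch d) : substSeq S a m x = substSeq S b m x := by
  induction m generalizing a b with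
  | zero => rfl
  | succ m ih =>
    rw [substSeq_succ, substSeq_succ, h 0 m.succ_pos, ih fun i hi => h (i + 1) (by omega)]

lemma substSeq_add (S : Fin k → Substitution d X) (a : ℕ → Fin k) (p q : ℕ) (x : Patch d) :
    substSeq S a (p + q) x = substSeq S a p (substSeq S (fun i => a (i + p)) q x) := by
  induction p generalizing a with
  | zero => simp only [Nat.zero_add, add_zero]; rfl
  | succ p ih =>
    rw [Nat.add_right_comm, substSeq_succ, ih, substSeq_succ]
    simp only [add_assoc]

lemma substSeq_biUnion (S : Fin k → Substitution d X) (a : ℕ → Fin k) (m : ℕ) (x : Patch d) :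
    substSeq S a m x = ⋃ E ∈ x, substSeq S a m {E} := by
  induction m generalizing a x with
  | zero => simp [substSeq]
  | succ m ih =>
    simp only [substSeq_succ]
    rw [ih, substPatch_biUnion]

lemma substSeq_mem_Patches (S : Fin k → Substitution d X) (a : ℕ → Fin k) (m : ℕ)
    {x' : Patch d} (h : x' ∈ Patches X) : substSeq S a m x' ∈ Patches X := by
  induction m generalizing a with
  | zero => exact h
  | succ m ih => exact substPatch_mem_Patches _ (ih _)

def lamProd (S : Fin k → Substitution d X) (a : ℕ → Fin k) (m : ℕ) : ℝ :=
  ∏ i ∈ Finset.range m, (S (a i)).lam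

lemma lamProd_succ (S : Fin k → Substitution d X) (a : ℕ → Fin k) (m : ℕ) :
    lamProd S a (m + 1) = (S (a 0)).lam * lamProd S (fun i => a (i + 1)) m := by
  rw [lamProd, Finset.prod_range_succ', mul_comm]
  rfl

lemma lamProd_le_pow (S : Fin k → Substitution d X) (a : ℕ → Fin k) (m : ℕ) {Λ : ℝ}
    (hΛ : ∀ j, (S j).lam ≤ Λ) : lamProd S a m ≤ Λ ^ m := by
  simpa [lamProd] using Finset.prod_le_prod (s := Finset.range m)
    (fun i _ => (zero_lt_one.trans (S (a i)).one_lt_lam).le) fun i _ => hΛ (a i)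

lemma lamProd_pos (S : Fin k → Substitution d X) (a : ℕ → Fin k) (m : ℕ) : 0 < lamProd S a m :=
  Finset.prod_pos fun i _ => zero_lt_one.trans (S (a i)).one_lt_lam

lemma substSeq_patchTrans (S : Fin k → Substitution d X) (a : ℕ → Fin k) (m : ℕ) (t : Pt d)
    (x : Patch d) :
    substSeq S a m (patchTrans t x) = patchTrans (lamProd S a m • t) (substSeq S a m x) := by
  induction m generalizing a t x with
  | zero => simp [substSeq, lamProd]
  | succ m ih =>
    rw [substSeq_succ, ih, substPatch_patchTrans, substSeq_succ, lamProd_succ, smul_smul]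

lemma psupp_substSeq (S : Fin k → Substitution d X) (a : ℕ → Fin k) (m : ℕ) {x' : Patch d}
    (h : x' ∈ Patches X) : psupp (substSeq S a m x') = lamProd S a m • psupp x' := by
  induction m generalizing a with
  | zero => simp [substSeq, lamProd]
  | succ m ih =>
    rw [substSeq_succ, psupp_substPatch _ fun D hD =>
        mem_TilesOf_of_mem_Patches (substSeq_mem_Patches S _ m h) hD,
      ih, smul_smul, lamProd_succ]

lemma psupp_substSeq_subset_closedBall (hX : ∀ x ∈ X, IsTiling x) (S : Fin k → Substitution d X)
    (b : ℕ → Fin k) (m : ℕ) {E : Set (Pt d)} (hE : E ∈ TilesOf X) {Λ δ : ℝ}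
    (hΛ : ∀ j, (S j).lam ≤ Λ) (hδ : diam E ≤ δ) {p : Pt d}
    (hp : p ∈ psupp (substSeq S b m {E})) :
    psupp (substSeq S b m {E}) ⊆ closedBall p (Λ ^ m * δ) := by
  rw [psupp_substSeq S b m (singleton_mem_Patches hE), psupp_singleton] at hp ⊢
  have hbdd := (isTile_of_mem_TilesOf hX hE).1.isBounded.smul₀ (lamProd S b m)
  have hdiam : diam (lamProd S b m • E) ≤ Λ ^ m * δ := by
    rw [diam_smul₀, Real.norm_of_nonneg (lamProd_pos S b m).le]
    exact mul_le_mul (lamProd_le_pow S b m hΛ) hδ diam_nonneg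
      ((lamProd_pos S b m).le.trans (lamProd_le_pow S b m hΛ))
  exact fun q hq => mem_closedBall.2 ((dist_le_diam_of_mem hbdd hq hp).trans hdiam)

end Substitution

section Primitivity

variable {ι : Type*}

def AllPos (M : Matrix ι ι ℕ) : Prop := ∀ p q, 0 < M p q

def NoZeroCol (M : Matrix ι ι ℕ) : Prop := ∀ q, ∃ p, 0 < M p q

lemma mul_apply_pos [Fintype ι] {M N : Matrix ι ι ℕ} {p r q : ι} (hM : 0 < M p r) (hN : 0 < N r q) :
    0 < (M * N) p q :=
  (Nat.mul_pos hM hN).trans_le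
    (Finset.single_le_sum (f := fun i => M p i * N i q) (fun _ _ => Nat.zero_le _)
      (Finset.mem_univ r))

lemma NoZeroCol.one [DecidableEq ι] : NoZeroCol (1 : Matrix ι ι ℕ) :=
  fun q => ⟨q, by simp⟩

lemma NoZeroCol.mul [Fintype ι] {M N : Matrix ι ι ℕ} (hM : NoZeroCol M) (hN : NoZeroCol N) :
    NoZeroCol (M * N) := fun q =>
  let ⟨r, hr⟩ := hN q
  let ⟨p, hp⟩ := hM r
  ⟨p, mul_apply_pos hp hr⟩

lemma AllPos.mul_noZeroCol [Fintype ι] {M N : Matrix ι ι ℕ} (hM : AllPos M) (hN : NoZeroCol N) :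
    AllPos (M * N) := fun p q =>
  let ⟨r, hr⟩ := hN q
  mul_apply_pos (hM p r) hr

end Primitivity

section MatSeq

variable {k l : ℕ} (A : Fin k → Matrix (Fin l) (Fin l) ℕ)

lemma matSeq_succ (a : ℕ → Fin k) (m : ℕ) :
    matSeq A a (m + 1) = A (a 0) * matSeq A (fun i => a (i + 1)) m :=
  rfl

lemma matSeq_add (a : ℕ → Fin k) (p q : ℕ) :
    matSeq A a (p + q) = matSeq A a p * matSeq A (fun i => a (i + p)) q := by
  induction p generalizing a with
  | zero => simp only [Nat.zero_add, add_zero, matSeq, Matrix.one_mul]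
  | succ p ih =>
    rw [Nat.add_right_comm, matSeq_succ, ih, matSeq_succ, Matrix.mul_assoc]
    simp only [add_assoc]

lemma matSeq_noZeroCol (hA : ∀ j, NoZeroCol (A j)) (a : ℕ → Fin k) (m : ℕ) :
    NoZeroCol (matSeq A a m) := by
  induction m generalizing a with
  | zero => exact NoZeroCol.one
  | succ m ih => exact (hA (a 0)).mul (ih _)

lemma AllPos.matSeq_mono (hA : ∀ j, NoZeroCol (A j)) {a : ℕ → Fin k} {m m' : ℕ} (hmm' : m ≤ m')
    (h : AllPos (matSeq A a m)) : AllPos (matSeq A a m') := by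
  obtain ⟨j, rfl⟩ := Nat.exists_eq_add_of_le hmm'
  rw [matSeq_add]
  exact h.mul_noZeroCol (matSeq_noZeroCol A hA _ _)

lemma continuous_matSeq (m : ℕ) : Continuous fun a : ℕ → Fin k => matSeq A a m := by
  induction m with
  | zero => exact continuous_const
  | succ m ih =>
    exact (continuous_of_discreteTopology.comp (continuous_apply 0)).matrix_mul
      (ih.comp (continuous_pi fun i => continuous_apply (i + 1)))

lemma exists_allPos_matSeq_forall (hA : ∀ j, NoZeroCol (A j))
    (hprim : ∀ b : ℕ → Fin k, SeqPrimitive A b) :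
    ∃ N : ℕ, ∀ b : ℕ → Fin k, AllPos (matSeq A b (N + 1)) := by
  let U : ℕ → Set (ℕ → Fin k) := fun N => {b | AllPos (matSeq A b (N + 1))}
  have hU_open : ∀ N, IsOpen (U N) := fun N =>
    (continuous_matSeq A (N + 1)).isOpen_preimage _ (isOpen_discrete {M | AllPos M})
  have hU_cover : Set.univ ⊆ ⋃ N, U N := fun b _ => by
    obtain ⟨N, hN⟩ := hprim b 0
    simp only [zero_add] at hN
    exact Set.mem_iUnion.2 ⟨N, hN⟩
  have hU_mono : Monotone U := fun N N' h _ hb =>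
    AllPos.matSeq_mono A hA (Nat.succ_le_succ h) hb
  obtain ⟨N, hN⟩ := isCompact_univ.elim_directed_cover U hU_open hU_cover hU_mono.directed_le
  exact ⟨N, fun b => hN (Set.mem_univ b)⟩

end MatSeq

section Supertiles

variable {d k l : ℕ} {X : Set (Patch d)}

lemma structMat_noZeroCol (hX : ∀ x ∈ X, IsTiling x) {Dp : Fin l → Set (Pt d)}
    (hDp : IsPrototileBasis X Dp) (Su : Substitution d X) : NoZeroCol (structMat Dp Su) := by
  intro q
  have hpatch : Su.map (Dp q) ∈ Patches X := by
    simpa [substPatch] using substPatch_mem_Patches Su (singleton_mem_Patches (hDp.1 q))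
  obtain ⟨p, hp⟩ := (isTile_of_mem_TilesOf hX (hDp.1 q)).2.1.nonempty
  have hp' : Su.lam • p ∈ psupp (Su.map (Dp q)) := by
    rw [Su.supp_eq _ (hDp.1 q)]
    exact ⟨p, hp, rfl⟩
  obtain ⟨T, hT, -⟩ := mem_psupp.1 hp'
  obtain ⟨i, t, rfl⟩ := hDp.2.2 T (mem_TilesOf_of_mem_Patches hpatch hT)
  exact ⟨i, (Set.ncard_pos (hpatch.1.subset fun _ hD => hD.1)).2 ⟨_, hT, t, rfl⟩⟩

lemma exists_tileTrans_mem_substSeq_of_matSeq_pos (S : Fin k → Substitution d X)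
    (Dp : Fin l → Set (Pt d)) (a : ℕ → Fin k) (m : ℕ) {i q : Fin l}
    (h : 0 < matSeq (fun j => structMat Dp (S j)) a m i q) :
    ∃ t : Pt d, tileTrans t (Dp i) ∈ substSeq S a m {Dp q} := by
  induction m generalizing a i q with
  | zero =>
    obtain rfl : i = q := by
      by_contra hne
      simp [matSeq, Matrix.one_apply_ne hne] at h
    exact ⟨0, by rw [tileTrans_zero]; rfl⟩
  | succ m ih =>
    rw [matSeq_succ, Matrix.mul_apply] at h
    obtain ⟨r, -, hr⟩ := Finset.exists_ne_zero_of_sum_ne_zero h.ne'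
    obtain ⟨u, hu⟩ := ih (fun i => a (i + 1)) (Nat.pos_of_ne_zero (right_ne_zero_of_mul hr))
    obtain ⟨T, ⟨hT, s, rfl⟩⟩ := Set.nonempty_of_ncard_ne_zero (left_ne_zero_of_mul hr)
    refine ⟨(S (a 0)).lam • u + s, Set.mem_biUnion hu ?_⟩
    rw [(S (a 0)).equivar, ← tileTrans_tileTrans]
    exact ⟨_, hT, rfl⟩

lemma agree_of_dSigma_lt {a b : ℕ → Fin k} {n : ℕ} (h : dSigma a b < 1 / (n : ℝ)) :
    ∀ i < n, a i = b i := by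
  intro i hi
  by_contra hne
  have hex : ∃ m, a m ≠ b m := ⟨i, hne⟩
  rw [dSigma, dif_pos hex] at h
  have hL : (Nat.find hex : ℝ) + 1 ≤ n := by exact_mod_cast (Nat.find_le hne).trans_lt hi
  exact h.not_ge (one_div_le_one_div_of_le (by positivity) hL)

variable (S : Fin k → Substitution d X) {Dp : Fin l → Set (Pt d)}

lemma exists_patchTrans_subset_substSeq (hDp : IsPrototileBasis X Dp) {D : Set (Pt d)}
    (hD : D ∈ TilesOf X) {a b : ℕ → Fin k} {n N : ℕ} (hab : ∀ i < n, a i = b i)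
    (hN : ∀ w : ℕ → Fin k, AllPos (matSeq (fun j => structMat Dp (S j)) w (N + 1)))
    {E : Set (Pt d)} (hE : E ∈ TilesOf X) :
    ∃ t : Pt d, patchTrans t (substSeq S a n {D}) ⊆ substSeq S b (n + (N + 1)) {E} := by
  obtain ⟨q, s, rfl⟩ := hDp.2.2 E hE
  obtain ⟨i, tD, rfl⟩ := hDp.2.2 D hD
  obtain ⟨u, hu⟩ := exists_tileTrans_mem_substSeq_of_matSeq_pos S Dp (fun j => b (j + n)) (N + 1)
    (hN _ i q)
  set v := lamProd S (fun j => b (j + n)) (N + 1) • s + (u + -tD)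
  have hv : tileTrans v (tileTrans tD (Dp i)) ∈
      substSeq S (fun j => b (j + n)) (N + 1) {tileTrans s (Dp q)} := by
    rw [← patchTrans_singleton, substSeq_patchTrans, tileTrans_tileTrans]
    refine ⟨_, hu, ?_⟩
    rw [tileTrans_tileTrans]
    congr 1
    simp only [v]
    abel
  refine ⟨lamProd S b n • v, ?_⟩
  rw [substSeq_congr S (fun j hj => hab j hj), ← substSeq_patchTrans, patchTrans_singleton,
    substSeq_add]
  exact substSeq_mono S b n (Set.singleton_subset_iff.2 hv)

lemma exists_lam_le (j₀ : Fin k) : ∃ Λ, 1 < Λ ∧ ∀ j, (S j).lam ≤ Λ :=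
  ⟨⨆ j, (S j).lam,
    (S j₀).one_lt_lam.trans_le (le_ciSup (Finite.bddAbove_range fun j => (S j).lam) j₀),
    le_ciSup (Finite.bddAbove_range fun j => (S j).lam)⟩

lemma le_of_closedBall_subset_psupp_substSeq (hd : 0 < d) (hX : ∀ x ∈ X, IsTiling x)
    {D : Set (Pt d)} (hD : D ∈ TilesOf X) (b : ℕ → Fin k) {Λ δ : ℝ} (hΛ1 : 1 < Λ)
    (hΛ : ∀ j, (S j).lam ≤ Λ) (hδ0 : 0 < δ) (hδ : diam D ≤ δ) {M m : ℕ} {p : Pt d}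
    (h : closedBall p (Λ ^ M * δ) ⊆ psupp (substSeq S b m {D})) : M ≤ m := by
  have : Nonempty (Fin d) := ⟨⟨0, hd⟩⟩
  have hsub := h.trans (psupp_substSeq_subset_closedBall hX S b m hD hΛ hδ
    (h (mem_closedBall_self (by positivity))))
  have hdiam := (diam_mono hsub isBounded_closedBall).trans (diam_closedBall (by positivity))
  rw [diam_closedBall_eq p (by positivity)] at hdiam
  rw [← pow_le_pow_iff_right₀ hΛ1]
  exact le_of_mul_le_mul_right (by linarith) hδ0

lemma exists_patchTrans_subset_substSeq_near (hX : ∀ x ∈ X, IsTiling x)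
    (hDp : IsPrototileBasis X Dp) {D : Set (Pt d)}
    (hD : D ∈ TilesOf X) {a b : ℕ → Fin k} {n N : ℕ} (hab : ∀ i < n, a i = b i)
    (hN : ∀ w : ℕ → Fin k, AllPos (matSeq (fun j => structMat Dp (S j)) w (N + 1)))
    {Λ δ : ℝ} (hΛ : ∀ j, (S j).lam ≤ Λ) (hδ : ∀ E ∈ TilesOf X, diam E ≤ δ) {m : ℕ}
    (hm : n + (N + 1) ≤ m) {p : Pt d} (hp : p ∈ psupp (substSeq S b m {D})) :
    ∃ t : Pt d, patchTrans t (substSeq S a n {D}) ⊆ substSeq S b m {D} ∧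
      psupp (patchTrans t (substSeq S a n {D})) ⊆ closedBall p (Λ ^ (n + (N + 1)) * δ) := by
  obtain ⟨j, rfl⟩ := Nat.exists_eq_add_of_le hm
  set inner := substSeq S (fun i => b (i + (n + (N + 1)))) j {D}
  have hinner : inner ∈ Patches X := substSeq_mem_Patches S _ j (singleton_mem_Patches hD)
  rw [substSeq_add] at hp ⊢
  obtain ⟨Q, hQ, hpQ⟩ := mem_psupp.1 hp
  rw [substSeq_biUnion] at hQ
  obtain ⟨E, hE, hQE⟩ := Set.mem_iUnion₂.1 hQ
  have hEX := mem_TilesOf_of_mem_Patches hinner hE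
  obtain ⟨t, ht⟩ := exists_patchTrans_subset_substSeq S hDp hD hab hN hEX
  exact ⟨t, ht.trans (substSeq_mono S b _ (Set.singleton_subset_iff.2 hE)),
    (psupp_mono ht).trans (psupp_substSeq_subset_closedBall hX S b _ hEX hΛ (hδ E hEX)
      (subset_psupp hQE hpQ))⟩

end Supertiles

theorem uniform_repetitivity_general
    {d l k : ℕ} (hd : 0 < d)
    (X : Set (Patch d)) (hX : ∀ x ∈ X, IsTiling x)
    (Dp : Fin l → Set (Pt d)) (hDp : IsPrototileBasis X Dp)
    (S : Fin k → Substitution d X)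
    (D : Set (Pt d)) (hD : D ∈ TilesOf X)
    (a : ℕ → Fin k)
    (hprim : ∀ b : ℕ → Fin k, SeqPrimitive (fun i => structMat Dp (S i)) b)
    (x' : Patch d) (n : ℕ)
    (hx' : x' ⊆ substSeq S a n {D})
    :
    ∃ R : ℝ, 0 < R ∧ ∀ b : ℕ → Fin k, dSigma a b < 1 / (n : ℝ) →
      ∀ x ∈ multiSpace S b D, ∀ c : Pt d,
        ∃ t : Pt d, patchTrans t x' ⊆ x ∧ psupp (patchTrans t x') ⊆ closedBall c R := by
  obtain ⟨N, hN⟩ := exists_allPos_matSeq_forall _ (fun j => structMat_noZeroCol hX hDp (S j)) hprim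
  obtain ⟨Λ, hΛ1, hΛ⟩ := exists_lam_le S (a 0)
  obtain ⟨δ, hδ0, hδ⟩ := hDp.exists_diam_le
  refine ⟨Λ ^ (n + (N + 1)) * δ, by positivity, fun b hb x hx c => ?_⟩
  set R := Λ ^ (n + (N + 1)) * δ
  set y := tilesMeeting x (closedBall c R)
  obtain ⟨m, -, t₀, ht₀⟩ :=
    hx.2 y (tilesMeeting_subset x _) (finite_tilesMeeting_closedBall hX hDp hx.1 c R)
  have hball : closedBall (t₀ + c) R ⊆ psupp (patchTrans t₀ y) := by
    rw [psupp_patchTrans, ← vadd_eq_add, ← vadd_closedBall]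
    exact Set.vadd_set_mono (subset_psupp_tilesMeeting (hX x hx.1) _)
  have hball' := hball.trans (psupp_mono ht₀)
  obtain ⟨τ, hτ, hτR⟩ := exists_patchTrans_subset_substSeq_near S hX hDp hD
    (agree_of_dSigma_lt hb) hN hΛ hδ
    (le_of_closedBall_subset_psupp_substSeq S hd hX hD b hΛ1 hΛ hδ0 (hδ D hD) hball')
    (hball' (mem_closedBall_self (by positivity)))
  obtain ⟨z, hzX, hWz⟩ := (substSeq_mem_Patches S b m (singleton_mem_Patches hD)).2
  have hcopy := (hX z hzX).1.subset_of_psupp_subset (ht₀.trans hWz) (hτ.trans hWz)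
    (hτR.trans hball)
  refine ⟨-t₀ + τ, ?_, ?_⟩
  · rw [← patchTrans_patchTrans]
    refine (patchTrans_mono _ (patchTrans_mono _ hx')).trans ?_
    refine (patchTrans_mono _ hcopy).trans ?_
    rw [patchTrans_patchTrans, neg_add_cancel, patchTrans_zero]
    exact tilesMeeting_subset x _
  · rw [← patchTrans_patchTrans, psupp_patchTrans]
    refine (Set.vadd_set_mono ((psupp_mono (patchTrans_mono _ hx')).trans hτR)).trans ?_
    rw [vadd_closedBall, vadd_eq_add, neg_add_cancel_left]

/-- Uniform repetitivity: a patch of `S^n_ā(D)` occurs, within any ball of a uniform radius `R`, in every tiling of every `X_b̄` with `d_Σ(ā,b̄) < 1/n`. -/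
theorem uniform_repetitivity
    {d l k : ℕ} (hd : 0 < d) (hl : 0 < l) (hk : 0 < k)
    (X : Set (Patch d)) (hX : ∀ x ∈ X, IsTiling x)
    (hXinv : TransInvariant X) (hXflc : FLC X)
    (Dp : Fin l → Set (Pt d)) (hDp : IsPrototileBasis X Dp)
    (S : Fin k → Substitution d X)
    (D : Set (Pt d)) (hD : D ∈ TilesOf X)
    (a : ℕ → Fin k)
    (hprim : ∀ b : ℕ → Fin k, SeqPrimitive (fun i => structMat Dp (S i)) b)
    (x' : Patch d) (hx'fin : x'.Finite) (n : ℕ) (hn : 0 < n)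
    (hx' : x' ⊆ substSeq S a n {D})
    :
    ∃ R : ℝ, 0 < R ∧ ∀ b : ℕ → Fin k, dSigma a b < 1 / (n : ℝ) →
      ∀ x ∈ multiSpace S b D, ∀ c : Pt d,
        ∃ t : Pt d, patchTrans t x' ⊆ x ∧ psupp (patchTrans t x') ⊆ closedBall c R :=
  uniform_repetitivity_general hd X hX Dp hDp S D hD a hprim x' n hx'

end
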